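/- Weighted Hölder inequality: let k ≥ 0 be an integer, τ₁, τ₂ ∈ ℝ, and p₁, p₂, q ∈ [1, ∞] with 1/p₁ + 1/p₂ = 1/q. If u₁ ∈ W^{k,p₁}_{-τ₁} and u₂ ∈ W^{k,p₂}_{-τ₂} are tensor fields on a reference manifold with background metric structure (h, r), then u₁ ⊗ u₂ ∈ W^{k,q}_{-τ₁-τ₂} and ‖u₁ ⊗ u₂‖_{W^{k,q}_{-τ₁-τ₂}} ≤ C ‖u₁‖_{W^{k,p₁}_{-τ₁}} ‖u₂‖_{W^{k,p₂}_{-τ₂}} for a constant C depending only on k. -/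

import Mathlib

/-! Multiplying the Leibniz bound for `|D^{(m)}(u₁ ⊗ u₂)|` by `r^{τ₁+τ₂+m}` and splitting the
weight as `r^{τ₁+m-i} · r^{τ₂+i}`, Minkowski's and Hölder's inequalities for the measure
`r^{-n} dμ` bound the `m`-th term of the norm by `Σ_i (m choose i) ‖u₁‖ ‖u₂‖ = 2^m ‖u₁‖ ‖u₂‖`;
hence `C = Σ_{m ≤ k} 2^m`. -/

open MeasureTheory ENNReal

/-- The weighted measure `r^{-n} dμ` used to encode weighted Lebesgue norms. -/
noncomputable def wMeas {M : Type} [MeasurableSpace M] (μ : Measure M) (n : ℝ)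
    (r : M → ℝ) : Measure M :=
  μ.withDensity (fun x => ENNReal.ofReal (r x ^ (-n)))

/-- The weighted `L^p_{-w}` norm `‖T‖_{L^p_{-w}} = ‖r^w |T|‖_{L^p(r^{-n} dμ)}`;
for `p < ∞` this is `(∫ r^{pw-n} |T|^p dμ)^{1/p}` and for `p = ∞` it is
`ess sup (r^w |T|)`. -/
noncomputable def wLp {M : Type} [MeasurableSpace M] (μ : Measure M) (n : ℝ)
    (r : M → ℝ) (w : ℝ) (p : ℝ≥0∞) (f : M → ℝ) : ℝ≥0∞ :=
  eLpNorm (fun x => r x ^ w * f x) p (wMeas μ n r)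

/-- The weighted Sobolev norm `‖T‖_{W^{k,p}_{-τ}} = Σ_{l≤k} ‖D^{(l)}T‖_{L^p_{-τ-l}}`,
where `a l` plays the role of the pointwise norm `|D^{(l)}T|_h`. -/
noncomputable def wSob {M : Type} [MeasurableSpace M] (μ : Measure M) (n : ℝ)
    (r : M → ℝ) (k : ℕ) (p : ℝ≥0∞) (τ : ℝ) (a : ℕ → M → ℝ) : ℝ≥0∞ :=
  ∑ l ∈ Finset.range (k + 1), wLp μ n r (τ + l) p (a l)

section WeightedNorms

variable {M : Type} [MeasurableSpace M] {μ : Measure M} {n : ℝ} {r : M → ℝ}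

theorem wLp_mono {w : ℝ} {p : ℝ≥0∞} {f g : M → ℝ} (hfg : ∀ x, |f x| ≤ |g x|) :
    wLp μ n r w p f ≤ wLp μ n r w p g :=
  eLpNorm_mono fun x => by
    rw [Real.norm_eq_abs, Real.norm_eq_abs, abs_mul, abs_mul]
    exact mul_le_mul_of_nonneg_left (hfg x) (abs_nonneg _)

theorem wLp_const_mul (w : ℝ) (p : ℝ≥0∞) (c : ℝ) (f : M → ℝ) :
    wLp μ n r w p (fun x => c * f x) = ‖c‖ₑ * wLp μ n r w p f := by
  unfold wLp
  rw [← eLpNorm_const_smul]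
  congr 1
  funext x
  simp only [Pi.smul_apply, smul_eq_mul]
  ring

theorem wLp_sum_le (hr : Measurable r) {ι : Type*} (s : Finset ι) (w : ℝ) {q : ℝ≥0∞}
    (hq : 1 ≤ q) {f : ι → M → ℝ} (hf : ∀ i ∈ s, Measurable (f i)) :
    wLp μ n r w q (fun x => ∑ i ∈ s, f i x) ≤ ∑ i ∈ s, wLp μ n r w q (f i) := by
  unfold wLp
  have hsum : (fun x => r x ^ w * ∑ i ∈ s, f i x) = ∑ i ∈ s, fun x => r x ^ w * f i x := by
    funext x
    rw [Finset.sum_apply, Finset.mul_sum]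
  rw [hsum]
  refine eLpNorm_sum_le (fun i hi => ?_) hq
  have := hf i hi
  exact Measurable.aestronglyMeasurable (by fun_prop)

theorem wLp_mul_le (hr_pos : ∀ x, 0 < r x) (hr : Measurable r) {w₁ w₂ : ℝ}
    {p₁ p₂ q : ℝ≥0∞} (hpq : 1 / p₁ + 1 / p₂ = 1 / q) {f g : M → ℝ}
    (hf : Measurable f) (hg : Measurable g) :
    wLp μ n r (w₁ + w₂) q (fun x => f x * g x) ≤ wLp μ n r w₁ p₁ f * wLp μ n r w₂ p₂ g := by
  have hsplit : (fun x => r x ^ (w₁ + w₂) * (f x * g x)) =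
      (fun x => r x ^ w₁ * f x) • (fun x => r x ^ w₂ * g x) := by
    funext x
    simp only [Pi.smul_apply', smul_eq_mul, Real.rpow_add (hr_pos x)]
    ring
  unfold wLp
  rw [hsplit]
  exact eLpNorm_smul_le_mul_eLpNorm (Measurable.aestronglyMeasurable (by fun_prop))
    (Measurable.aestronglyMeasurable (by fun_prop))
    (hpqr := ⟨by simpa only [one_div] using hpq⟩)

theorem wLp_le_wSob {k l : ℕ} (hl : l ≤ k) (p : ℝ≥0∞) (τ : ℝ) (a : ℕ → M → ℝ) :
    wLp μ n r (τ + l) p (a l) ≤ wSob μ n r k p τ a :=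
  Finset.single_le_sum (f := fun l : ℕ => wLp μ n r (τ + l) p (a l))
    (fun _ _ => zero_le) (Finset.mem_range.2 (Nat.lt_succ_of_le hl))

theorem wLp_leibniz_le (hr_pos : ∀ x, 0 < r x) (hr : Measurable r) {k m : ℕ} (hm : m ≤ k)
    {τ₁ τ₂ : ℝ} {p₁ p₂ q : ℝ≥0∞} (hq : 1 ≤ q) (hpq : 1 / p₁ + 1 / p₂ = 1 / q)
    {a b : ℕ → M → ℝ} (ha : ∀ l, Measurable (a l)) (hb : ∀ l, Measurable (b l)) :
    wLp μ n r (τ₁ + τ₂ + m) q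
        (fun x => ∑ i ∈ Finset.range (m + 1), (m.choose i : ℝ) * a (m - i) x * b i x) ≤
      2 ^ m * (wSob μ n r k p₁ τ₁ a * wSob μ n r k p₂ τ₂ b) := by
  have hterm : ∀ i ∈ Finset.range (m + 1),
      wLp μ n r (τ₁ + τ₂ + m) q (fun x => (m.choose i : ℝ) * a (m - i) x * b i x) ≤
        m.choose i * (wSob μ n r k p₁ τ₁ a * wSob μ n r k p₂ τ₂ b) := by
    intro i hi
    have him : i ≤ m := Nat.lt_succ_iff.mp (Finset.mem_range.mp hi)
    have hweight : τ₁ + τ₂ + m = (τ₁ + (m - i : ℕ)) + (τ₂ + i) := by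
      rw [Nat.cast_sub him]
      ring
    simp only [mul_assoc, hweight, wLp_const_mul, Real.enorm_natCast]
    gcongr
    calc _ ≤ wLp μ n r (τ₁ + (m - i : ℕ)) p₁ (a (m - i)) * wLp μ n r (τ₂ + i) p₂ (b i) :=
          wLp_mul_le hr_pos hr hpq (ha _) (hb _)
      _ ≤ _ := mul_le_mul' (wLp_le_wSob (by omega) _ _ _) (wLp_le_wSob (by omega) _ _ _)
  calc _ ≤ ∑ i ∈ Finset.range (m + 1),
        wLp μ n r (τ₁ + τ₂ + m) q (fun x => (m.choose i : ℝ) * a (m - i) x * b i x) :=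
        wLp_sum_le hr _ _ hq fun i _ => by have := ha (m - i); have := hb i; fun_prop
    _ ≤ ∑ i ∈ Finset.range (m + 1),
        m.choose i * (wSob μ n r k p₁ τ₁ a * wSob μ n r k p₂ τ₂ b) := Finset.sum_le_sum hterm
    _ = _ := by
      rw [← Finset.sum_mul, ← Nat.cast_sum, Nat.sum_range_choose, Nat.cast_pow, Nat.cast_ofNat]

end WeightedNorms

/-- weighted Hölder inequality: if `1/p₁ + 1/p₂ = 1/q`,
`u₁ ∈ W^{k,p₁}_{-τ₁}`, `u₂ ∈ W^{k,p₂}_{-τ₂}`, then `u₁ ⊗ u₂ ∈ W^{k,q}_{-τ₁-τ₂}` with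
`‖u₁ ⊗ u₂‖ ≤ C ‖u₁‖ ‖u₂‖`, `C` depending only on `k`.  Here `a l, b l, c l` denote the
pointwise `h`-norms of `D^{(l)}u₁`, `D^{(l)}u₂`, `D^{(l)}(u₁ ⊗ u₂)`, which satisfy the
Leibniz bound `c m ≤ Σ_i (m choose i) a_{m-i} b_i` pointwise. -/
theorem stmt1 (k : ℕ) :
    ∃ C : ℝ≥0∞, 0 < C ∧ C ≠ ⊤ ∧
      ∀ (M : Type) (_ : MeasurableSpace M) (μ : Measure M) (n : ℝ) (r : M → ℝ),
        (∀ x, 0 < r x) → Measurable r →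
        ∀ (τ₁ τ₂ : ℝ) (p₁ p₂ q : ℝ≥0∞), 1 ≤ p₁ → 1 ≤ p₂ → 1 ≤ q →
          1 / p₁ + 1 / p₂ = 1 / q →
        ∀ (a b c : ℕ → M → ℝ),
          (∀ l, Measurable (a l)) → (∀ l, Measurable (b l)) →
          (∀ l x, 0 ≤ a l x) → (∀ l x, 0 ≤ b l x) → (∀ l x, 0 ≤ c l x) →
          (∀ m, m ≤ k → ∀ x, c m x ≤
            ∑ i ∈ Finset.range (m + 1), (m.choose i : ℝ) * a (m - i) x * b i x) →
          wSob μ n r k q (τ₁ + τ₂) c ≤ C * wSob μ n r k p₁ τ₁ a * wSob μ n r k p₂ τ₂ b := by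
  refine ⟨∑ m ∈ Finset.range (k + 1), 2 ^ m, ?_, ?_, ?_⟩
  · exact one_pos.trans_le (Finset.single_le_sum (f := fun m => (2 : ℝ≥0∞) ^ m)
      (fun _ _ => zero_le) (Finset.mem_range.2 k.succ_pos))
  · exact (ENNReal.sum_lt_top.2 fun m _ => ENNReal.pow_lt_top ofNat_lt_top).ne
  intro M _ μ n r hr_pos hr τ₁ τ₂ p₁ p₂ q _ _ hq hpq a b c ha hb ha0 hb0 hc0 hleibniz
  have hc : ∀ m ∈ Finset.range (k + 1), wLp μ n r (τ₁ + τ₂ + m) q (c m) ≤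
      2 ^ m * (wSob μ n r k p₁ τ₁ a * wSob μ n r k p₂ τ₂ b) := by
    intro m hm_range
    have hm : m ≤ k := Nat.lt_succ_iff.mp (Finset.mem_range.mp hm_range)
    refine (wLp_mono fun x => ?_).trans (wLp_leibniz_le hr_pos hr hm hq hpq ha hb)
    have hsum_nonneg : 0 ≤ ∑ i ∈ Finset.range (m + 1), (m.choose i : ℝ) * a (m - i) x * b i x :=
      Finset.sum_nonneg fun i _ => by have := ha0 (m - i) x; have := hb0 i x; positivity
    rw [abs_of_nonneg (hc0 m x), abs_of_nonneg hsum_nonneg]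
    exact hleibniz m hm x
  calc wSob μ n r k q (τ₁ + τ₂) c ≤ ∑ m ∈ Finset.range (k + 1),
        2 ^ m * (wSob μ n r k p₁ τ₁ a * wSob μ n r k p₂ τ₂ b) := Finset.sum_le_sum hc
    _ = _ := by rw [← Finset.sum_mul, mul_assoc]
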